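/- If G admits a fall-coloring with k colors and k ≥ χ(H), then the Cartesian product G □ H admits a fall-coloring with k colors. -/

import Mathlib

/-- Cartesian (box) product of simple graphs. -/
def cartProd {α β : Type*} (G : SimpleGraph α) (H : SimpleGraph β) : SimpleGraph (α × β) where
  Adj a b := (a.1 = b.1 ∧ H.Adj a.2 b.2) ∨ (G.Adj a.1 b.1 ∧ a.2 = b.2)
  symm := by
    constructor
    rintro a b (⟨h1, h2⟩ | ⟨h1, h2⟩)
    · exact Or.inl ⟨h1.symm, h2.symm⟩
    · exact Or.inr ⟨h1.symm, h2.symm⟩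
  loopless := ⟨by rintro a (⟨-, h⟩ | ⟨h, -⟩) <;> exact h.ne rfl⟩

/-- A fall-coloring with `k` colors: a proper coloring in which every vertex is a b-vertex. -/
def IsFallColoring {α : Type*} (G : SimpleGraph α) (k : ℕ) (f : α → Fin k) : Prop :=
  (∀ ⦃a b⦄, G.Adj a b → f a ≠ f b) ∧
  ∀ a : α, ∀ c : Fin k, c ≠ f a → ∃ b, G.Adj a b ∧ f b = c

/-!
Let `f` be a fall-coloring of `G` and `c` a proper coloring of `H`, both with colors in `ℤ/k`.
Color `(u, v)` by `f u + c v`: each copy `G × {v}` carries a cyclic shift of `f`, hence is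
fall-colored, and adjacent copies `G × {v}`, `G × {v'}` are shifted by different amounts, so
the coloring is proper across copies as well.
-/

namespace IsFallColoring

variable {α β : Type*} {G : SimpleGraph α} {k : ℕ}

theorem of_isEmpty [IsEmpty α] (f : α → Fin k) : IsFallColoring G k f :=
  ⟨fun a => isEmptyElim a, fun a => isEmptyElim a⟩

theorem cartProd_add [NeZero k] {H : SimpleGraph β} {f : α → Fin k}
    (hf : IsFallColoring G k f) (c : H.Coloring (Fin k)) :
    IsFallColoring (cartProd G H) k fun p => f p.1 + c p.2 := by
  refine ⟨?_, ?_⟩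
  · rintro ⟨u, v⟩ ⟨u', v'⟩ (⟨rfl, hvv'⟩ | ⟨huu', rfl⟩) h
    · exact c.valid hvv' (add_left_cancel h)
    · exact hf.1 huu' (add_right_cancel h)
  · rintro ⟨u, v⟩ d hd
    obtain ⟨u', huu', hu'⟩ := hf.2 u (d - c v) fun h => hd (by simp [← h])
    exact ⟨(u', v), Or.inr ⟨huu', rfl⟩, by simp [hu']⟩

end IsFallColoring

theorem stmt17 {α β : Type*} (G : SimpleGraph α) (H : SimpleGraph β) (k : ℕ)
    (f : α → Fin k) (hf : IsFallColoring G k f)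
    (hchi : H.chromaticNumber ≤ (k : ℕ∞)) :
    ∃ g : α × β → Fin k, IsFallColoring (cartProd G H) k g := by
  obtain ⟨c⟩ := SimpleGraph.chromaticNumber_le_iff_colorable.mp hchi
  rcases Nat.eq_zero_or_pos k with rfl | hk
  · have : IsEmpty α := ⟨fun a => (f a).elim0⟩
    exact ⟨fun p => f p.1, .of_isEmpty _⟩
  · have : NeZero k := ⟨hk.ne'⟩
    exact ⟨_, hf.cartProd_add c⟩
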